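/- Let Φ be a 3-CNF formula and P^Φ its associated disjunctive program. Then Φ is satisfiable if and only if P^Φ is not HEF. -/

import Mathlib

structure Rule (α : Type) where
  B : Finset α
  F : Finset α
  H : Finset α

variable {α : Type}

/-- Z is outbound in Y for program P. -/
def Outbound [DecidableEq α] (P : Set (Rule α)) (Y Z : Finset α) : Prop :=
  ∃ r ∈ P, (r.H ∩ Z).Nonempty ∧ (r.B ∩ (Y \ Z)).Nonempty ∧
    r.B ∩ Z = ∅ ∧ r.H ∩ (Y \ Z) = ∅

/-- Y is an elementary set for P. -/
def Elementary [DecidableEq α] (P : Set (Rule α)) (Y : Finset α) : Prop :=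
  Y.Nonempty ∧ ∀ Z : Finset α, Z ⊂ Y → Z.Nonempty → Outbound P Y Z

/-- X is a disjunctive set for P. -/
def DisjSet [DecidableEq α] (P : Set (Rule α)) (X : Finset α) : Prop :=
  ∃ r ∈ P, 1 < (r.H ∩ X).card

/-- The projection P_X of P on a set X of atoms. -/
def proj [DecidableEq α] (P : Set (Rule α)) (X : Finset α) : Set (Rule α) :=
  {r' | ∃ r ∈ P, (r.B ∩ X).Nonempty ∧ (r.H ∩ X).Nonempty ∧
        r' = ⟨r.B ∩ X, ∅, r.H ∩ X⟩}

/-- P is head-elementary-set-free. -/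
def HEF [DecidableEq α] (P : Set (Rule α)) : Prop :=
  ∀ r ∈ P, ∀ E : Finset α, Elementary P E → (E ∩ r.H).card ≤ 1

/-- Atoms of the program `P^Φ`. -/
inductive Atom : Type
  | phi : Atom
  | a : ℕ → Atom
  | na : ℕ → Atom
  | c : ℕ → Atom
deriving DecidableEq

/-- The atom opposite to a literal (variable index, sign). -/
def oppAtom : ℕ × Bool → Atom
  | (v, true) => Atom.na v
  | (v, false) => Atom.a v

/-- The atom corresponding to a literal. -/
def litAtom : ℕ × Bool → Atom
  | (v, true) => Atom.a v
  | (v, false) => Atom.na v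

/-- NV(c_i): opposites of the atoms of the literals of clause C_i. -/
def NV (C : ℕ → Fin 3 → ℕ × Bool) (i : ℕ) : Finset Atom :=
  {oppAtom (C i 0), oppAtom (C i 1), oppAtom (C i 2)}

/-- The program `P^Φ` associated with a 3-CNF with m variables `A_1,…,A_m`
and n clauses `C_1,…,C_n`, the clauses given by `C`. -/
def PPhi (m n : ℕ) (C : ℕ → Fin 3 → ℕ × Bool) : Set (Rule Atom) :=
  ({⟨{Atom.phi}, ∅, {Atom.c 0, Atom.c (n+1)}⟩,
    ⟨{Atom.c 0}, ∅, {Atom.c 1}⟩,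
    ⟨{Atom.c (n+1), Atom.na 1}, ∅, {Atom.a 1}⟩,
    ⟨{Atom.c (n+1), Atom.a 1}, ∅, {Atom.na 1}⟩,
    ⟨{Atom.a m, Atom.na m}, ∅, {Atom.c 0}⟩} : Set (Rule Atom)) ∪
  {r | ∃ i ∈ Finset.Icc 1 n, ∃ α ∈ NV C i,
        r = ⟨{Atom.c i, α}, ∅, {Atom.c (i+1)}⟩} ∪
  {r | ∃ i ∈ Finset.Icc 1 (m-1),
        r = ⟨{Atom.a i, Atom.na (i+1)}, ∅, {Atom.a (i+1)}⟩ ∨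
        r = ⟨{Atom.a i, Atom.a (i+1)}, ∅, {Atom.na (i+1)}⟩ ∨
        r = ⟨{Atom.na i, Atom.na (i+1)}, ∅, {Atom.a (i+1)}⟩ ∨
        r = ⟨{Atom.na i, Atom.a (i+1)}, ∅, {Atom.na (i+1)}⟩}

/-- All variable indices mentioned by clauses 1..n lie in [1,m]. -/
def ValidCNF (m n : ℕ) (C : ℕ → Fin 3 → ℕ × Bool) : Prop :=
  ∀ i ∈ Finset.Icc 1 n, ∀ j : Fin 3, (C i j).1 ∈ Finset.Icc 1 m

/-- Truth assignment X satisfies the 3-CNF. -/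
def Sat (n : ℕ) (C : ℕ → Fin 3 → ℕ × Bool) (X : ℕ → Bool) : Prop :=
  ∀ i ∈ Finset.Icc 1 n, ∃ j : Fin 3, X (C i j).1 = (C i j).2


/-!
A satisfying assignment `X` yields the cycle `c₀ → c₁ → ⋯ → c_{n+1} → ℓ₁ → ⋯ → ℓ_m → c₀`
through the true literal atoms `ℓ_v`. Each step is a rule whose body meets the cycle only in
the predecessor (for `c_i → c_{i+1}`, the other body atom is the opposite of a true literal of
`C_i`), so the cycle is elementary, and it contains both head atoms of `φ → c₀ ∨ c_{n+1}`.

Conversely, that rule is the only one with two head atoms, so a violation of HEF is an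
elementary set `E ∋ c₀, c_{n+1}`. Elementarity applied to the arc of `E` after `c_i` forces
an atom of `NV(c_i)` to be missing from `E`; applied to the arc after the variable `A_j`, it
forces `a_j ∈ E` or `na_j ∈ E`. Hence `v ↦ (a_v ∈ E)` satisfies every clause.
-/

open Finset Relation

section

variable [DecidableEq α] {P : Set (Rule α)} {E : Finset α}

def DepEdge (P : Set (Rule α)) (E : Finset α) (x y : α) : Prop :=
  ∃ r ∈ P, r.B ∩ E = {x} ∧ r.H ∩ E = {y}

theorem DepEdge.outbound {x y : α} {Z : Finset α} (h : DepEdge P E x y) (hx : x ∉ Z)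
    (hy : y ∈ Z) (hZ : Z ⊆ E) : Outbound P E Z := by
  obtain ⟨r, hr, hB, hH⟩ := h
  have hxB : x ∈ r.B ∩ E := hB ▸ mem_singleton_self x
  have hyH : y ∈ r.H ∩ E := hH ▸ mem_singleton_self y
  refine ⟨r, hr, ⟨y, mem_inter.2 ⟨(mem_inter.1 hyH).1, hy⟩⟩,
    ⟨x, mem_inter.2 ⟨(mem_inter.1 hxB).1, mem_sdiff.2 ⟨(mem_inter.1 hxB).2, hx⟩⟩⟩, ?_, ?_⟩
  · refine eq_empty_of_forall_notMem fun u hu => hx ?_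
    have : u ∈ r.B ∩ E := mem_inter.2 ⟨(mem_inter.1 hu).1, hZ (mem_inter.1 hu).2⟩
    rw [hB, mem_singleton] at this
    exact this ▸ (mem_inter.1 hu).2
  · refine eq_empty_of_forall_notMem fun u hu => ?_
    obtain ⟨huH, huE, huZ⟩ : u ∈ r.H ∧ u ∈ E ∧ u ∉ Z := by simpa using hu
    have : u ∈ r.H ∩ E := mem_inter.2 ⟨huH, huE⟩
    rw [hH, mem_singleton] at this
    exact huZ (this ▸ hy)

theorem elementary_of_reflTransGen (hne : E.Nonempty)
    (h : ∀ x ∈ E, ∀ y ∈ E, ReflTransGen (DepEdge P E) x y) : Elementary P E := by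
  refine ⟨hne, fun Z hZ ⟨z, hz⟩ => ?_⟩
  obtain ⟨w, hwE, hwZ⟩ := exists_of_ssubset hZ
  suffices ∀ y, ReflTransGen (DepEdge P E) w y → y ∈ Z → Outbound P E Z from
    this z (h w hwE z (hZ.1 hz)) hz
  intro y hy
  induction hy with
  | refl => exact fun hw => absurd hw hwZ
  | @tail b c _ hbc ih =>
    intro hc
    by_cases hb : b ∈ Z
    · exact ih hb
    · exact hbc.outbound hb hc hZ.subset

theorem elementary_of_hub {h : α} (hh : h ∈ E)
    (hub : ∀ x ∈ E, ReflTransGen (DepEdge P E) x h ∧ ReflTransGen (DepEdge P E) h x) :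
    Elementary P E :=
  elementary_of_reflTransGen ⟨h, hh⟩ fun x hx y hy => (hub x hx).1.trans (hub y hy).2

theorem Elementary.exists_rule_cut (hE : Elementary P E) (p : α → Prop) {z w : α}
    (hz : z ∈ E) (hpz : p z) (hw : w ∈ E) (hpw : ¬ p w) :
    ∃ r ∈ P, (∃ y ∈ r.H, y ∈ E ∧ p y) ∧ (∃ x ∈ r.B, x ∈ E ∧ ¬ p x) ∧
      (∀ x ∈ r.B, x ∈ E → ¬ p x) ∧ (∀ y ∈ r.H, y ∈ E → p y) := by
  classical
  have hZ : E.filter p ⊂ E :=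
    (filter_ssubset).2 ⟨w, hw, hpw⟩
  obtain ⟨r, hr, ⟨y, hy⟩, ⟨x, hx⟩, hB, hH⟩ := hE.2 _ hZ ⟨z, mem_filter.2 ⟨hz, hpz⟩⟩
  simp only [mem_inter, mem_filter, mem_sdiff] at hy hx
  refine ⟨r, hr, ⟨y, hy.1, hy.2⟩, ⟨x, hx.1, hx.2.1, fun h => hx.2.2 ⟨hx.2.1, h⟩⟩,
    fun u hu huE hpu => ?_, fun u hu huE => ?_⟩
  · exact (eq_empty_iff_forall_notMem.1 hB) u (mem_inter.2 ⟨hu, mem_filter.2 ⟨huE, hpu⟩⟩)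
  · by_contra hpu
    exact (eq_empty_iff_forall_notMem.1 hH) u
      (mem_inter.2 ⟨hu, mem_sdiff.2 ⟨huE, fun h => hpu (mem_filter.1 h).2⟩⟩)

theorem not_HEF_of_elementary {r : Rule α} (hr : r ∈ P) (hE : Elementary P E) {x y : α}
    (hxy : x ≠ y) (hx : x ∈ E ∩ r.H) (hy : y ∈ E ∩ r.H) : ¬ HEF P := fun h =>
  (h r hr E hE).not_gt (one_lt_card.2 ⟨x, hx, y, hy, hxy⟩)

end

theorem oppAtom_eq_litAtom (q : ℕ × Bool) : oppAtom q = litAtom (q.1, !q.2) := by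
  obtain ⟨v, b⟩ := q
  cases b <;> rfl

@[simp]
theorem litAtom_inj {v w : ℕ} {b b' : Bool} :
    litAtom (v, b) = litAtom (w, b') ↔ v = w ∧ b = b' := by
  cases b <;> cases b' <;> simp [litAtom]

@[simp]
theorem litAtom_ne_c (q : ℕ × Bool) (k : ℕ) : litAtom q ≠ Atom.c k := by
  obtain ⟨v, b⟩ := q
  cases b <;> simp [litAtom]

@[simp]
theorem c_ne_litAtom (q : ℕ × Bool) (k : ℕ) : Atom.c k ≠ litAtom q :=
  (litAtom_ne_c q k).symm

theorem mem_PPhi {m n : ℕ} {C : ℕ → Fin 3 → ℕ × Bool} {r : Rule Atom} :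
    r ∈ PPhi m n C ↔
      r = ⟨{Atom.phi}, ∅, {Atom.c 0, Atom.c (n+1)}⟩ ∨
      r = ⟨{Atom.c 0}, ∅, {Atom.c 1}⟩ ∨
      (∃ b, r = ⟨{Atom.c (n+1), litAtom (1, !b)}, ∅, {litAtom (1, b)}⟩) ∨
      (∃ b, r = ⟨{litAtom (m, b), litAtom (m, !b)}, ∅, {Atom.c 0}⟩) ∨
      (∃ i ∈ Icc 1 n, ∃ j : Fin 3,
        r = ⟨{Atom.c i, oppAtom (C i j)}, ∅, {Atom.c (i+1)}⟩) ∨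
      (∃ i ∈ Icc 1 (m-1), ∃ b b',
        r = ⟨{litAtom (i, b), litAtom (i+1, !b')}, ∅, {litAtom (i+1, b')}⟩) := by
  constructor
  · rintro ((hr | ⟨i, hi, α, hα, rfl⟩) | ⟨i, hi, hr⟩)
    · simp only [Set.mem_insert_iff, Set.mem_singleton_iff] at hr
      rcases hr with rfl | rfl | rfl | rfl | rfl
      · exact Or.inl rfl
      · exact Or.inr (Or.inl rfl)
      · exact Or.inr (Or.inr (Or.inl ⟨true, rfl⟩))
      · exact Or.inr (Or.inr (Or.inl ⟨false, rfl⟩))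
      · exact Or.inr (Or.inr (Or.inr (Or.inl ⟨true, rfl⟩)))
    · simp only [NV, mem_insert, mem_singleton] at hα
      refine Or.inr (Or.inr (Or.inr (Or.inr (Or.inl ⟨i, hi, ?_⟩))))
      rcases hα with rfl | rfl | rfl
      exacts [⟨0, rfl⟩, ⟨1, rfl⟩, ⟨2, rfl⟩]
    · refine Or.inr (Or.inr (Or.inr (Or.inr (Or.inr ⟨i, hi, ?_⟩))))
      rcases hr with rfl | rfl | rfl | rfl
      exacts [⟨true, true, rfl⟩, ⟨true, false, rfl⟩, ⟨false, true, rfl⟩, ⟨false, false, rfl⟩]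
  · rintro (rfl | rfl | ⟨b, rfl⟩ | ⟨b, rfl⟩ | ⟨i, hi, j, rfl⟩ | ⟨i, hi, b, b', rfl⟩)
    · simp [PPhi]
    · simp [PPhi]
    · cases b <;> simp [PPhi, litAtom]
    · cases b <;> simp [PPhi, litAtom, pair_comm]
    · refine Or.inl (Or.inr ⟨i, hi, _, ?_, rfl⟩)
      fin_cases j <;> simp [NV]
    · refine Or.inr ⟨i, hi, ?_⟩
      cases b <;> cases b' <;> simp [litAtom]

def cycleSet (m n : ℕ) (X : ℕ → Bool) : Finset Atom :=
  (range (n+2)).image Atom.c ∪ (Icc 1 m).image fun v => litAtom (v, X v)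

section Cycle

variable {m n : ℕ} {C : ℕ → Fin 3 → ℕ × Bool} {X : ℕ → Bool}

@[simp]
theorem c_mem_cycleSet {k : ℕ} : Atom.c k ∈ cycleSet m n X ↔ k ≤ n+1 := by
  simp [cycleSet, Nat.lt_succ_iff]

@[simp]
theorem litAtom_mem_cycleSet {v : ℕ} {b : Bool} :
    litAtom (v, b) ∈ cycleSet m n X ↔ (1 ≤ v ∧ v ≤ m) ∧ X v = b := by
  simp only [cycleSet, mem_union, mem_image, mem_range, mem_Icc, litAtom_inj, c_ne_litAtom,
    and_false, exists_false, false_or]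
  constructor
  · rintro ⟨w, hw, rfl, rfl⟩
    exact ⟨hw, rfl⟩
  · rintro ⟨hv, rfl⟩
    exact ⟨v, hv, rfl, rfl⟩

theorem depEdge_cycleSet {x z y : Atom}
    (hr : ⟨{x, z}, ∅, {y}⟩ ∈ PPhi m n C) (hx : x ∈ cycleSet m n X) (hz : z ∉ cycleSet m n X)
    (hy : y ∈ cycleSet m n X) : DepEdge (PPhi m n C) (cycleSet m n X) x y :=
  ⟨_, hr, by rw [insert_inter_of_mem hx, singleton_inter_of_notMem hz]; rfl,
    singleton_inter_of_mem hy⟩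

theorem litAtom_not_mem_cycleSet (v : ℕ) : litAtom (v, !X v) ∉ cycleSet m n X := by
  simp

local notation "edge" => DepEdge (PPhi m n C) (cycleSet m n X)

theorem depEdge_c_succ (hX : Sat n C X) {k : ℕ} (hk : k ≤ n) : edge (Atom.c k) (Atom.c (k+1)) := by
  rcases Nat.eq_zero_or_pos k with rfl | hk0
  · exact ⟨_, mem_PPhi.2 (Or.inr (Or.inl rfl)), singleton_inter_of_mem (by simp),
      singleton_inter_of_mem (by simp)⟩
  obtain ⟨j, hj⟩ := hX k (mem_Icc.2 ⟨hk0, hk⟩)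
  refine depEdge_cycleSet (mem_PPhi.2 (Or.inr (Or.inr (Or.inr (Or.inr (Or.inl
    ⟨k, mem_Icc.2 ⟨hk0, hk⟩, j, rfl⟩)))))) (by simp; omega) ?_ (by simp; omega)
  rw [oppAtom_eq_litAtom, ← hj]
  exact litAtom_not_mem_cycleSet _

theorem depEdge_c_litAtom_one (hm : 1 ≤ m) :
    edge (Atom.c (n+1)) (litAtom (1, X 1)) :=
  depEdge_cycleSet (mem_PPhi.2 (Or.inr (Or.inr (Or.inl ⟨X 1, rfl⟩)))) (by simp)
    (litAtom_not_mem_cycleSet _) (by simp [hm])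

theorem depEdge_litAtom_succ {v : ℕ} (hv : 1 ≤ v) (hvm : v < m) :
    edge (litAtom (v, X v)) (litAtom (v+1, X (v+1))) :=
  depEdge_cycleSet (mem_PPhi.2 (Or.inr (Or.inr (Or.inr (Or.inr (Or.inr
    ⟨v, mem_Icc.2 ⟨hv, by omega⟩, X v, X (v+1), rfl⟩))))))
    (by simp; omega) (litAtom_not_mem_cycleSet _) (by simp; omega)

theorem depEdge_litAtom_c_zero (hm : 1 ≤ m) : edge (litAtom (m, X m)) (Atom.c 0) :=
  depEdge_cycleSet (mem_PPhi.2 (Or.inr (Or.inr (Or.inr (Or.inl ⟨X m, rfl⟩)))))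
    (by simp [hm]) (litAtom_not_mem_cycleSet _) (by simp)

theorem reflTransGen_c_c (hX : Sat n C X) {k l : ℕ} (hkl : k ≤ l) (hl : l ≤ n+1) :
    ReflTransGen edge (Atom.c k) (Atom.c l) :=
  (reflTransGen_of_succ_of_le (fun i j => edge (Atom.c i) (Atom.c j))
    (fun i hi => depEdge_c_succ hX (by simp at hi; omega)) hkl).lift _ fun _ _ h => h

theorem reflTransGen_litAtom_litAtom {v w : ℕ} (hv : 1 ≤ v) (hvw : v ≤ w) (hw : w ≤ m) :
    ReflTransGen edge (litAtom (v, X v)) (litAtom (w, X w)) :=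
  (reflTransGen_of_succ_of_le (fun i j => edge (litAtom (i, X i)) (litAtom (j, X j)))
    (fun i hi => depEdge_litAtom_succ (by simp at hi; omega) (by simp at hi; omega)) hvw).lift _
    fun _ _ h => h

theorem reflTransGen_c_last_c_zero (hm : 1 ≤ m) : ReflTransGen edge (Atom.c (n+1)) (Atom.c 0) :=
  ((ReflTransGen.single (depEdge_c_litAtom_one hm)).trans
    (reflTransGen_litAtom_litAtom le_rfl hm le_rfl)).tail (depEdge_litAtom_c_zero hm)

theorem elementary_cycleSet (hm : 1 ≤ m) (hX : Sat n C X) :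
    Elementary (PPhi m n C) (cycleSet m n X) := by
  refine elementary_of_hub (h := Atom.c 0) (by simp) fun x hx => ?_
  simp only [cycleSet, mem_union, mem_image, mem_range, mem_Icc] at hx
  rcases hx with ⟨k, hk, rfl⟩ | ⟨v, ⟨hv1, hvm⟩, rfl⟩
  · exact ⟨(reflTransGen_c_c hX (by omega) le_rfl).trans (reflTransGen_c_last_c_zero hm),
      reflTransGen_c_c hX (Nat.zero_le k) (by omega)⟩
  · exact ⟨(reflTransGen_litAtom_litAtom hv1 hvm le_rfl).tail (depEdge_litAtom_c_zero hm),
      ((reflTransGen_c_c hX (Nat.zero_le _) le_rfl).tail (depEdge_c_litAtom_one hm)).trans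
        (reflTransGen_litAtom_litAtom le_rfl hv1 hvm)⟩

end Cycle

theorem not_HEF_PPhi_of_sat {m n : ℕ} (hm : 1 ≤ m) {C : ℕ → Fin 3 → ℕ × Bool} {X : ℕ → Bool}
    (hX : Sat n C X) : ¬ HEF (PPhi m n C) :=
  not_HEF_of_elementary (mem_PPhi.2 (Or.inl rfl)) (elementary_cycleSet hm hX)
    (x := Atom.c 0) (y := Atom.c (n+1)) (by simp) (by simp) (by simp)

/-- `arcAfterVar j` and `arcAfterClause i` cut out the arcs `ℓ_{j+1} ⋯ ℓ_m c₀` and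
`c_{i+1} ⋯ c_{n+1} ℓ₁ ⋯ ℓ_m` of the cycle, taking literal atoms of both signs: the only rules
entering them have a body atom of `A_j`, resp. the body atom `c_i`. -/
def arcAfterVar (j : ℕ) : Atom → Prop
  | .phi => False
  | .a k => j < k
  | .na k => j < k
  | .c k => k = 0

def arcAfterClause (i : ℕ) : Atom → Prop
  | .phi => False
  | .a _ => True
  | .na _ => True
  | .c k => i < k

@[simp]
theorem arcAfterVar_litAtom (j : ℕ) (q : ℕ × Bool) : arcAfterVar j (litAtom q) ↔ j < q.1 := by
  obtain ⟨v, b⟩ := q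
  cases b <;> rfl

@[simp]
theorem arcAfterVar_c (j k : ℕ) : arcAfterVar j (Atom.c k) ↔ k = 0 := Iff.rfl

@[simp]
theorem arcAfterClause_c (i k : ℕ) : arcAfterClause i (Atom.c k) ↔ i < k := Iff.rfl

@[simp]
theorem arcAfterClause_litAtom (i : ℕ) (q : ℕ × Bool) : arcAfterClause i (litAtom q) := by
  obtain ⟨v, b⟩ := q
  cases b <;> trivial

section

variable {m n : ℕ} {C : ℕ → Fin 3 → ℕ × Bool} {E : Finset Atom}

theorem Elementary.exists_litAtom_mem (hE : Elementary (PPhi m n C) E) (h0 : Atom.c 0 ∈ E)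
    (hn1 : Atom.c (n+1) ∈ E) {j : ℕ} (hj : 1 ≤ j) (hjm : j ≤ m) : ∃ b, litAtom (j, b) ∈ E := by
  obtain ⟨r, hr, ⟨y, hyH, hyE, hpy⟩, ⟨x, hxB, hxE, hpx⟩, hB, hH⟩ :=
    hE.exists_rule_cut (arcAfterVar j) h0 (by simp) hn1 (by simp)
  rcases mem_PPhi.1 hr with rfl | rfl | ⟨b, rfl⟩ | ⟨b, rfl⟩ | ⟨i, hi, k, rfl⟩ | ⟨i, hi, b, b', rfl⟩
  all_goals simp only [mem_insert, mem_singleton] at hyH hxB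
  · simp_all
  · simp_all
  · simp_all
  · rcases hxB with rfl | rfl <;> simp only [arcAfterVar_litAtom, not_lt] at hpx <;>
      exact ⟨_, by rwa [le_antisymm hjm hpx]⟩
  · simp_all
  · subst hyH
    rcases hxB with rfl | rfl <;> simp only [arcAfterVar_litAtom, not_lt] at hpx hpy
    · exact ⟨b, by rwa [show j = i by omega]⟩
    · omega

theorem Elementary.exists_oppAtom_not_mem (hE : Elementary (PPhi m n C) E)
    (h0 : Atom.c 0 ∈ E) (hn1 : Atom.c (n+1) ∈ E) {i : ℕ} (hi : 1 ≤ i) (hin : i ≤ n) :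
    ∃ j, oppAtom (C i j) ∉ E := by
  obtain ⟨r, hr, ⟨y, hyH, hyE, hpy⟩, ⟨x, hxB, hxE, hpx⟩, hB, hH⟩ :=
    hE.exists_rule_cut (arcAfterClause i) hn1 (by simp; omega) h0 (by simp)
  rcases mem_PPhi.1 hr with rfl | rfl | ⟨b, rfl⟩ | ⟨b, rfl⟩ | ⟨k, hk, j, rfl⟩ | ⟨k, hk, b, b', rfl⟩
  all_goals simp only [mem_insert, mem_singleton] at hyH hxB
  · simp_all
  · simp_all
  · rcases hxB with rfl | rfl <;> simp at hpx
    omega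
  · simp_all
  · subst hyH
    rcases hxB with rfl | rfl
    · simp only [arcAfterClause_c, not_lt] at hpx hpy
      obtain rfl : k = i := by omega
      refine ⟨j, fun hj => hB _ (by simp) hj ?_⟩
      simp [oppAtom_eq_litAtom]
    · simp [oppAtom_eq_litAtom] at hpx
  · rcases hxB with rfl | rfl <;> simp at hpx

end

theorem exists_elementary_of_not_HEF_PPhi {m n : ℕ} {C : ℕ → Fin 3 → ℕ × Bool}
    (h : ¬ HEF (PPhi m n C)) :
    ∃ E, Elementary (PPhi m n C) E ∧ Atom.c 0 ∈ E ∧ Atom.c (n+1) ∈ E := by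
  simp only [HEF, not_forall, not_le] at h
  obtain ⟨r, hr, E, hE, hcard⟩ := h
  have singleton_head (y : Atom) (hy : r.H = {y}) : False := by
    rw [hy] at hcard
    exact hcard.not_ge ((card_le_card inter_subset_right).trans (card_singleton y).le)
  rcases mem_PPhi.1 hr with rfl | rfl | ⟨_, rfl⟩ | ⟨_, rfl⟩ | ⟨_, _, _, rfl⟩ | ⟨_, _, _, _, rfl⟩
  · obtain ⟨x, hx, y, hy, hxy⟩ := one_lt_card.1 hcard
    simp only [mem_inter, mem_insert, mem_singleton] at hx hy
    refine ⟨E, hE, ?_⟩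
    rcases hx with ⟨hxE, rfl | rfl⟩ <;> rcases hy with ⟨hyE, rfl | rfl⟩ <;> simp_all
  all_goals exact (singleton_head _ rfl).elim

theorem sat_of_elementary {m n : ℕ} {C : ℕ → Fin 3 → ℕ × Bool} (hC : ValidCNF m n C)
    {E : Finset Atom} (hE : Elementary (PPhi m n C) E) (h0 : Atom.c 0 ∈ E)
    (hn1 : Atom.c (n+1) ∈ E) : Sat n C fun v => decide (Atom.a v ∈ E) := by
  intro i hi
  obtain ⟨j, hj⟩ := hE.exists_oppAtom_not_mem h0 hn1 (mem_Icc.1 hi).1 (mem_Icc.1 hi).2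
  refine ⟨j, ?_⟩
  have hv := mem_Icc.1 (hC i hi j)
  generalize C i j = q at hj hv ⊢
  obtain ⟨v, b⟩ := q
  cases b
  · simpa [oppAtom] using hj
  · obtain ⟨b, hb⟩ := hE.exists_litAtom_mem h0 hn1 hv.1 hv.2
    cases b
    · exact absurd hb hj
    · simpa [litAtom] using hb

theorem stmt14_general (m n : ℕ) (hm : 1 ≤ m)
    (C : ℕ → Fin 3 → ℕ × Bool) (hC : ValidCNF m n C) :
    (∃ X : ℕ → Bool, Sat n C X) ↔ ¬ HEF (PPhi m n C) := by
  constructor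
  · rintro ⟨X, hX⟩
    exact not_HEF_PPhi_of_sat hm hX
  · intro h
    obtain ⟨E, hE, h0, hn1⟩ := exists_elementary_of_not_HEF_PPhi h
    exact ⟨_, sat_of_elementary hC hE h0 hn1⟩

theorem stmt14 (m n : ℕ) (hm : 1 ≤ m) (hn : 1 ≤ n)
    (C : ℕ → Fin 3 → ℕ × Bool) (hC : ValidCNF m n C) :
    (∃ X : ℕ → Bool, Sat n C X) ↔ ¬ HEF (PPhi m n C) :=
  stmt14_general m n hm C hC
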